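/- Let A be a unital JB-algebra, a, b ∈ A₊°, and define γ(t) := U_{a^{1/2}}((U_{a^{-1/2}} b)^t) for t ∈ [0,1]. Then γ(0) = a, γ(1) = b, and d_T(γ(s), γ(t)) = |s-t|·d_T(a,b) for all s, t ∈ [0,1]; that is, γ is a geodesic path for Thompson's metric connecting a and b. -/

import Mathlib

/-! Conjugation by the unit `a^{1/2}` is an order automorphism, so it preserves `M(·/·)` and hence
Thompson's metric, and it maps `cᵗ` to `γ(t)` for `c = U_{a^{-1/2}} b`. For powers of the single
strictly positive element `c` everything is read off the spectrum:
`M(cˢ/cᵗ) = sup_{σ(c)} x^{s-t}`, so `d_T(cˢ, cᵗ) = |s - t| · sup_{σ(c)} |log x|`, and the endpoints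
give `d_T(a, b) = sup_{σ(c)} |log x|`. -/

noncomputable section

variable {A : Type*} [CStarAlgebra A] [PartialOrder A] [StarOrderedRing A]

/-- `M(a/b) = inf {l > 0 : a ≤ l b}`. -/
def Mrel (a b : A) : ℝ := sInf {l : ℝ | 0 < l ∧ a ≤ l • b}

/-- Thompson's metric. -/
def dT (a b : A) : ℝ := Real.log (max (Mrel a b) (Mrel b a))

/-- Hilbert's metric. -/
def dH (a b : A) : ℝ := Real.log (Mrel a b * Mrel b a)

/-- The variation seminorm `max σ(a) - min σ(a)`. -/
def vnorm (a : A) : ℝ := sSup (spectrum ℝ a) - sInf (spectrum ℝ a)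

/-- The path `γ(t) = U_{a^{1/2}} ((U_{a^{-1/2}} b)^t)`. -/
def gpath (a b : A) (t : ℝ) : A :=
  cfc Real.sqrt a *
    cfc (fun x : ℝ => x ^ t)
      (cfc (fun x : ℝ => (Real.sqrt x)⁻¹) a * b * cfc (fun x : ℝ => (Real.sqrt x)⁻¹) a) *
    cfc Real.sqrt a

open Set

lemma max_rpow_rpow_neg {x : ℝ} (hx : 0 < x) (u : ℝ) :
    max (x ^ u) (x ^ (-u)) = Real.exp (|u| * |Real.log x|) := by
  rw [Real.rpow_def_of_pos hx, Real.rpow_def_of_pos hx, mul_neg, ← Real.exp_monotone.map_max,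
    ← abs_eq_max_neg, abs_mul, mul_comm]

lemma log_max_sSup_rpow_image {S : Set ℝ} (hS : IsCompact S) (hpos : ∀ x ∈ S, 0 < x) (u : ℝ) :
    Real.log (max (sSup ((· ^ u) '' S)) (sSup ((· ^ (-u)) '' S)))
      = |u| * sSup ((|Real.log ·|) '' S) := by
  rcases S.eq_empty_or_nonempty with rfl | hne
  · simp
  have hlog : ContinuousOn (|Real.log ·|) S :=
    (Real.continuousOn_log.mono fun x hx => (hpos x hx).ne').abs
  obtain ⟨x₀, hx₀, hsup, hmax⟩ := hS.exists_sSup_image_eq_and_ge hne hlog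
  have hbound : ∀ v ∈ ({u, -u} : Set ℝ), ∀ x ∈ S, x ^ v ≤ Real.exp (|u| * |Real.log x₀|) := by
    intro v hv x hx
    have hx' := max_rpow_rpow_neg (hpos x hx) u
    have hmono : Real.exp (|u| * |Real.log x|) ≤ Real.exp (|u| * |Real.log x₀|) :=
      Real.exp_le_exp.2 (mul_le_mul_of_nonneg_left (hmax x hx) (abs_nonneg u))
    rcases hv with rfl | rfl
    · exact (le_max_left _ _).trans (hx' ▸ hmono)
    · exact (le_max_right _ _).trans (hx' ▸ hmono)
  have hbdd : ∀ v ∈ ({u, -u} : Set ℝ), BddAbove ((· ^ v) '' S) := fun v hv =>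
    ⟨_, forall_mem_image.2 (hbound v hv)⟩
  have hmax_eq : max (sSup ((· ^ u) '' S)) (sSup ((· ^ (-u)) '' S))
      = Real.exp (|u| * |Real.log x₀|) := by
    refine le_antisymm (max_le ?_ ?_) ?_
    · exact csSup_le (hne.image _) (forall_mem_image.2 (hbound u (by simp)))
    · exact csSup_le (hne.image _) (forall_mem_image.2 (hbound (-u) (by simp)))
    · rw [← max_rpow_rpow_neg (hpos x₀ hx₀)]
      exact max_le_max (le_csSup (hbdd u (by simp)) (mem_image_of_mem _ hx₀))
        (le_csSup (hbdd (-u) (by simp)) (mem_image_of_mem _ hx₀))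
  rw [hmax_eq, Real.log_exp, hsup]

lemma IsUnit.star_left_conjugate_le_conjugate_iff {R : Type*} [Ring R] [StarRing R]
    [PartialOrder R] [StarOrderedRing R] {u x y : R} (hu : IsUnit u) :
    star u * x * u ≤ star u * y * u ↔ x ≤ y := by
  rw [← sub_nonneg, ← sub_mul, ← mul_sub, hu.star_left_conjugate_nonneg_iff, sub_nonneg]

lemma Mrel_star_conjugate {u : A} (hu : IsUnit u) (x y : A) :
    Mrel (star u * x * u) (star u * y * u) = Mrel x y := by
  unfold Mrel
  congr! 4 with l
  rw [← smul_mul_assoc, ← mul_smul_comm, hu.star_left_conjugate_le_conjugate_iff]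

lemma dT_star_conjugate {u : A} (hu : IsUnit u) (x y : A) :
    dT (star u * x * u) (star u * y * u) = dT x y := by
  simp only [dT, Mrel_star_conjugate hu]

lemma Mrel_eq_of_forall_le_smul_iff {B : Type*} [CStarAlgebra B] [PartialOrder B] {x y : B}
    {K : ℝ} (hK : 0 ≤ K) (h : ∀ l : ℝ, 0 < l → (x ≤ l • y ↔ K ≤ l)) : Mrel x y = K := by
  have hset : {l : ℝ | 0 < l ∧ x ≤ l • y} = Ioi 0 ∩ Ici K := by
    ext l
    simp only [mem_ofPred_eq, mem_inter_iff, mem_Ioi, mem_Ici]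
    exact ⟨fun hl => ⟨hl.1, (h l hl.1).1 hl.2⟩, fun hl => ⟨hl.1, (h l hl.1).2 hl.2⟩⟩
  rw [Mrel, hset]
  rcases hK.eq_or_lt with rfl | hK
  · rw [inter_eq_left.2 Ioi_subset_Ici_self, csInf_Ioi]
  · rw [inter_eq_right.2 (Ici_subset_Ioi.2 hK), csInf_Ici]

lemma Mrel_cfc_rpow {c : A} (hc : IsStrictlyPositive c) (s t : ℝ) :
    Mrel (cfc (fun x : ℝ => x ^ s) c) (cfc (fun x : ℝ => x ^ t) c)
      = sSup ((· ^ (s - t)) '' spectrum ℝ c) := by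
  have hpos : ∀ x ∈ spectrum ℝ c, 0 < x := fun x hx => hc.spectrum_pos hx
  have hcont : ∀ v : ℝ, ContinuousOn (fun x : ℝ => x ^ v) (spectrum ℝ c) := fun v =>
    continuousOn_id.rpow_const fun x hx => Or.inl (hpos x hx).ne'
  have hbdd : BddAbove ((· ^ (s - t)) '' spectrum ℝ c) :=
    ((spectrum.isCompact c).image_of_continuousOn (hcont _)).bddAbove
  refine Mrel_eq_of_forall_le_smul_iff
    (Real.sSup_nonneg (forall_mem_image.2 fun x hx => (Real.rpow_pos_of_pos (hpos x hx) _).le))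
    fun l hl => ?_
  rw [← cfc_const_mul l _ c (hcont t),
    cfc_le_iff (fun x : ℝ => x ^ s) (fun x : ℝ => l * x ^ t) c (hcont s)
      (continuousOn_const.mul (hcont t))]
  have hpt : ∀ x ∈ spectrum ℝ c, (x ^ s ≤ l * x ^ t ↔ x ^ (s - t) ≤ l) := fun x hx => by
    rw [Real.rpow_sub (hpos x hx), div_le_iff₀ (Real.rpow_pos_of_pos (hpos x hx) t)]
  rw [forall₂_congr hpt]
  exact ⟨fun h => Real.sSup_le (forall_mem_image.2 h) hl.le,
    fun h x hx => (le_csSup hbdd (mem_image_of_mem _ hx)).trans h⟩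

lemma dT_cfc_rpow {c : A} (hc : IsStrictlyPositive c) (s t : ℝ) :
    dT (cfc (fun x : ℝ => x ^ s) c) (cfc (fun x : ℝ => x ^ t) c)
      = |s - t| * sSup ((|Real.log ·|) '' spectrum ℝ c) := by
  rw [dT, Mrel_cfc_rpow hc, Mrel_cfc_rpow hc, ← neg_sub s t,
    log_max_sSup_rpow_image (spectrum.isCompact c) fun x hx => hc.spectrum_pos hx]

lemma cfc_mul_cfc_eq_one {B : Type*} [CStarAlgebra B] {a : B} {f g : ℝ → ℝ}
    (h : ∀ x ∈ spectrum ℝ a, f x * g x = 1) (hf : ContinuousOn f (spectrum ℝ a))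
    (hg : ContinuousOn g (spectrum ℝ a)) (ha : IsSelfAdjoint a) : cfc f a * cfc g a = 1 := by
  rw [← cfc_mul f g a, cfc_congr h, cfc_const_one ℝ a]

lemma cfc_sqrt_mul_cfc_sqrt {a : A} (ha : 0 ≤ a) : cfc Real.sqrt a * cfc Real.sqrt a = a := by
  rw [← cfc_mul _ _ a, cfc_congr fun x hx => Real.mul_self_sqrt (spectrum_nonneg_of_nonneg ha hx),
    cfc_id' ℝ a]

lemma continuousOn_inv_sqrt_spectrum {a : A} (ha : IsStrictlyPositive a) :
    ContinuousOn (fun x : ℝ => (√x)⁻¹) (spectrum ℝ a) :=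
  Real.continuous_sqrt.continuousOn.inv₀ fun _ hx => Real.sqrt_ne_zero'.2 (ha.spectrum_pos hx)

lemma cfc_sqrt_mul_cfc_inv_sqrt {a : A} (ha : IsStrictlyPositive a) :
    cfc Real.sqrt a * cfc (fun x : ℝ => (√x)⁻¹) a = 1 :=
  cfc_mul_cfc_eq_one (fun _ hx => mul_inv_cancel₀ (Real.sqrt_ne_zero'.2 (ha.spectrum_pos hx)))
    Real.continuous_sqrt.continuousOn (continuousOn_inv_sqrt_spectrum ha) ha.isSelfAdjoint

lemma cfc_inv_sqrt_mul_cfc_sqrt {a : A} (ha : IsStrictlyPositive a) :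
    cfc (fun x : ℝ => (√x)⁻¹) a * cfc Real.sqrt a = 1 :=
  cfc_mul_cfc_eq_one (fun _ hx => inv_mul_cancel₀ (Real.sqrt_ne_zero'.2 (ha.spectrum_pos hx)))
    (continuousOn_inv_sqrt_spectrum ha) Real.continuous_sqrt.continuousOn ha.isSelfAdjoint

/-- `γ` is a geodesic path for Thompson's metric connecting `a` and `b`. -/
theorem stmt12 (a b : A) (ha0 : 0 ≤ a) (hau : IsUnit a) (hb0 : 0 ≤ b) (hbu : IsUnit b) :
    gpath a b 0 = a ∧ gpath a b 1 = b ∧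
    ∀ s t : ℝ, s ∈ Set.Icc (0 : ℝ) 1 → t ∈ Set.Icc (0 : ℝ) 1 →
      dT (gpath a b s) (gpath a b t) = |s - t| * dT a b := by
  have ha : IsStrictlyPositive a := hau.isStrictlyPositive ha0
  set q := cfc Real.sqrt a
  set q' := cfc (fun x : ℝ => (√x)⁻¹) a
  have hq : IsSelfAdjoint q := cfc_predicate _ a
  have hq' : IsSelfAdjoint q' := cfc_predicate _ a
  have hqq' : q * q' = 1 := cfc_sqrt_mul_cfc_inv_sqrt ha
  have hq'q : q' * q = 1 := cfc_inv_sqrt_mul_cfc_sqrt ha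
  have hqu : IsUnit q := isUnit_iff_exists.2 ⟨q', hqq', hq'q⟩
  have hq'u : IsUnit q' := isUnit_iff_exists.2 ⟨q, hq'q, hqq'⟩
  have hc : IsStrictlyPositive (q' * b * q') := by
    simpa only [hq'.star_eq] using
      hq'u.isStrictlyPositive_star_left_conjugate_iff.2 (hbu.isStrictlyPositive hb0)
  have hγ : ∀ t, gpath a b t = star q * cfc (fun x : ℝ => x ^ t) (q' * b * q') * q := fun t => by
    rw [hq.star_eq]
    rfl
  have hdist : ∀ s t, dT (gpath a b s) (gpath a b t)
      = |s - t| * sSup ((|Real.log ·|) '' spectrum ℝ (q' * b * q')) := fun s t => by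
    rw [hγ, hγ, dT_star_conjugate hqu, dT_cfc_rpow hc]
  have h0 : gpath a b 0 = a := by
    rw [hγ, hq.star_eq, cfc_congr fun x _ => Real.rpow_zero x, cfc_const_one ℝ (q' * b * q'),
      mul_one, cfc_sqrt_mul_cfc_sqrt ha0]
  have h1 : gpath a b 1 = b := by
    rw [hγ, hq.star_eq, cfc_congr fun x _ => Real.rpow_one x, cfc_id' ℝ (q' * b * q'),
      ← mul_assoc, ← mul_assoc, hqq', one_mul, mul_assoc, hq'q, mul_one]
  have hab : dT a b = sSup ((|Real.log ·|) '' spectrum ℝ (q' * b * q')) := by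
    simpa [h0, h1] using hdist 0 1
  exact ⟨h0, h1, fun s t _ _ => by rw [hdist, hab]⟩
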